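/- Let {e_1,…,e_d} and {f_1,…,f_d} be two orthonormal bases of ℂ^d such that ⟨e_k, f_l⟩ ≠ 0 for all k, l. Define the channel E on ℂ²⊗ℂ^d with the 4d Kraus operators (1/√2)|0⟩⟨0|⊗|e_k⟩⟨e_k|, (1/√2)|1⟩⟨+|⊗|e_k⟩⟨e_k|, (1/√2)|0⟩⟨1|⊗|f_k⟩⟨e_k|, (1/√2)|1⟩⟨−|⊗|f_k⟩⟨e_k| (k = 1,…,d), where |±⟩ = (|0⟩±|1⟩)/√2. This is a valid Kraus family (the operators satisfy the completeness relation on ℂ²⊗ℂ^d), and α(E) = 1: for all unit vectors ψ, φ ∈ ℂ²⊗ℂ^d, tr[E(|ψ⟩⟨ψ|)·E(|φ⟩⟨φ|)] ≠ 0. -/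

import Mathlib

open Matrix Kronecker

/-- The quantum channel associated with a Kraus family: `ρ ↦ ∑ k, E k * ρ * (E k)ᴴ`. -/
noncomputable def channelApply {ι m n : Type*} [Fintype ι] [Fintype m] [Fintype n]
    (E : ι → Matrix m n ℂ) (ρ : Matrix n n ℂ) : Matrix m m ℂ :=
  ∑ k, E k * ρ * (E k)ᴴ

/-- `|0⟩ ∈ ℂ²`. -/
noncomputable def ket0 : Fin 2 → ℂ := ![1, 0]

/-- `|1⟩ ∈ ℂ²`. -/
noncomputable def ket1 : Fin 2 → ℂ := ![0, 1]

/-- `|+⟩ = (|0⟩ + |1⟩)/√2`. -/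
noncomputable def ketP : Fin 2 → ℂ := ![(Real.sqrt 2 : ℂ)⁻¹, (Real.sqrt 2 : ℂ)⁻¹]

/-- `|−⟩ = (|0⟩ − |1⟩)/√2`. -/
noncomputable def ketM : Fin 2 → ℂ := ![(Real.sqrt 2 : ℂ)⁻¹, -(Real.sqrt 2 : ℂ)⁻¹]

/-- The `4d` Kraus operators `(1/√2)|0⟩⟨0|⊗|e_k⟩⟨e_k|`, `(1/√2)|1⟩⟨+|⊗|e_k⟩⟨e_k|`,
`(1/√2)|0⟩⟨1|⊗|f_k⟩⟨e_k|`, `(1/√2)|1⟩⟨−|⊗|f_k⟩⟨e_k|` on `ℂ² ⊗ ℂ^d`. -/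
noncomputable def EOp {d : ℕ} (e f : Fin d → Fin d → ℂ) :
    Fin 4 × Fin d → Matrix (Fin 2 × Fin d) (Fin 2 × Fin d) ℂ :=
  fun p =>
    (Real.sqrt 2 : ℂ)⁻¹ •
      (![vecMulVec ket0 (star ket0) ⊗ₖ vecMulVec (e p.2) (star (e p.2)),
         vecMulVec ket1 (star ketP) ⊗ₖ vecMulVec (e p.2) (star (e p.2)),
         vecMulVec ket0 (star ket1) ⊗ₖ vecMulVec (f p.2) (star (e p.2)),
         vecMulVec ket1 (star ketM) ⊗ₖ vecMulVec (f p.2) (star (e p.2))] p.1)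

/-!
Each Kraus operator has the form `c • |u⟩⟨v|`, and
`tr[E(|ψ⟩⟨ψ|) E(|φ⟩⟨φ|)] = ∑_{p,q} |⟨E_p ψ, E_q φ⟩|²`, so it suffices to find one pair of Kraus
operators with `⟨E_p ψ, E_q φ⟩ ≠ 0`. Write `a_k = ⟨0 ⊗ e_k, ψ⟩`, `b_k = ⟨1 ⊗ e_k, ψ⟩` and `a'`, `b'`
likewise for `φ`. The pairs `(|0⟩⟨0| ⊗ |e_k⟩⟨e_k|, |0⟩⟨1| ⊗ |f_l⟩⟨e_l|)`,
`(|0⟩⟨1| ⊗ |f_k⟩⟨e_k|, |0⟩⟨0| ⊗ |e_l⟩⟨e_l|)` and `(|1⟩⟨+| ⊗ |e_k⟩⟨e_k|, |1⟩⟨−| ⊗ |f_l⟩⟨e_l|)` give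
inner products proportional to `ā_k b'_l ⟨e_k, f_l⟩`, `b̄_k a'_l ⟨f_k, e_l⟩` and
`(ā_k + b̄_k)(a'_l − b'_l) ⟨e_k, f_l⟩`. As no `⟨e_k, f_l⟩` vanishes, if all of them were zero then
`a = 0 ∨ b' = 0`, `b = 0 ∨ a' = 0` and `a + b = 0 ∨ a' = b'`, which forces `ψ = 0` or `φ = 0`.

Completeness holds because `E_p† E_p = ½ |v_p⟩⟨v_p|` and
`|0⟩⟨0| + |+⟩⟨+| + |1⟩⟨1| + |−⟩⟨−| = 2`.
-/

namespace Matrix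

variable {l m n p R : Type*}

def kronVec [Mul R] (u : m → R) (x : n → R) : m × n → R := fun q => u q.1 * x q.2

theorem kronecker_vecMulVec [CommSemigroup R] (u : l → R) (v : m → R) (x : n → R) (y : p → R) :
    vecMulVec u v ⊗ₖ vecMulVec x y = vecMulVec (kronVec u x) (kronVec v y) := by
  ext ⟨i, j⟩ ⟨i', j'⟩
  simp only [kronecker_apply, vecMulVec_apply, kronVec]
  ac_rfl

theorem star_kronVec [CommSemiring R] [StarRing R] (u : m → R) (x : n → R) :
    star (kronVec u x) = kronVec (star u) (star x) := by
  ext q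
  simp [kronVec, star_mul']

theorem kronVec_dotProduct_kronVec [CommSemiring R] [Fintype m] [Fintype n]
    (u v : m → R) (x y : n → R) :
    kronVec u x ⬝ᵥ kronVec v y = (u ⬝ᵥ v) * (x ⬝ᵥ y) := by
  simp only [dotProduct, kronVec, Fintype.sum_prod_type, Finset.sum_mul_sum]
  exact Finset.sum_congr rfl fun _ _ => Finset.sum_congr rfl fun _ _ => by ring

theorem star_kronVec_dotProduct [CommSemiring R] [StarRing R] [Fintype m] [Fintype n]
    (u : m → R) (x : n → R) (ψ : m × n → R) :
    star (kronVec u x) ⬝ᵥ ψ = ∑ i, star (u i) * (star x ⬝ᵥ Function.curry ψ i) := by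
  simp only [dotProduct, kronVec, Fintype.sum_prod_type, Finset.mul_sum, Function.curry_apply,
    Pi.star_apply, star_mul', mul_assoc]

theorem sum_kronecker_sum [CommSemiring R] {ι κ : Type*} [Fintype ι] [Fintype κ]
    (A : ι → Matrix l m R) (B : κ → Matrix n p R) :
    (∑ i, A i) ⊗ₖ (∑ j, B j) = ∑ q : ι × κ, A q.1 ⊗ₖ B q.2 := by
  ext ⟨a, b⟩ ⟨c, d⟩
  simp [Matrix.sum_apply, Finset.sum_mul_sum, Fintype.sum_prod_type]

theorem sum_vecMulVec_kronVec [CommSemiring R] [StarRing R] {ι κ : Type*} [Fintype ι] [Fintype κ]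
    (u : ι → m → R) (x : κ → n → R) :
    ∑ q : ι × κ, vecMulVec (kronVec (u q.1) (x q.2)) (star (kronVec (u q.1) (x q.2))) =
      (∑ i, vecMulVec (u i) (star (u i))) ⊗ₖ (∑ j, vecMulVec (x j) (star (x j))) := by
  simp only [sum_kronecker_sum, kronecker_vecMulVec, star_kronVec]

theorem smul_vecMulVec_mulVec [CommSemiring R] [Fintype n] (c : R) (u : m → R) (v ψ : n → R) :
    (c • vecMulVec u v) *ᵥ ψ = (c * (v ⬝ᵥ ψ)) • u := by
  rw [smul_mulVec, vecMulVec_mulVec, op_smul_eq_smul, smul_smul]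

theorem conjTranspose_mul_self_smul_vecMulVec [CommSemiring R] [StarRing R] [Fintype m]
    (c : R) (u : m → R) (v : n → R) :
    (c • vecMulVec u (star v))ᴴ * (c • vecMulVec u (star v)) =
      (star c * c * (star u ⬝ᵥ u)) • vecMulVec v (star v) := by
  rw [conjTranspose_smul, conjTranspose_vecMulVec, star_star, Matrix.smul_mul, Matrix.mul_smul,
    vecMulVec_mul_vecMulVec, vecMulVec_smul, smul_smul, smul_smul]

theorem conj_vecMulVec_star [CommSemiring R] [StarRing R] [Fintype n]
    (A : Matrix m n R) (ψ : n → R) :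
    A * vecMulVec ψ (star ψ) * Aᴴ = vecMulVec (A *ᵥ ψ) (star (A *ᵥ ψ)) := by
  rw [mul_vecMulVec, vecMulVec_mul, star_mulVec]

theorem trace_vecMulVec_mul_vecMulVec [Fintype n] (x y : n → ℂ) :
    (vecMulVec x (star x) * vecMulVec y (star y)).trace = Complex.normSq (star x ⬝ᵥ y) := by
  rw [vecMulVec_mul_vecMulVec, trace_vecMulVec, dotProduct_smul, Complex.normSq_eq_conj_mul_self,
    smul_eq_mul, mul_comm, dotProduct_star, dotProduct_comm]
  rfl

section Orthonormal

variable [Fintype n] [DecidableEq n] {e : n → n → ℂ}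

theorem sum_vecMulVec_eq_one (he : ∀ k l, star (e k) ⬝ᵥ e l = if k = l then 1 else 0) :
    ∑ k, vecMulVec (e k) (star (e k)) = 1 := by
  have hM : (of e)ᵀᴴ * (of e)ᵀ = 1 := by
    ext k l
    simpa [mul_apply, dotProduct, one_apply] using he k l
  have hM' : (of e)ᵀ * (of e)ᵀᴴ = 1 := mul_eq_one_comm.mp hM
  ext i j
  simpa [mul_apply, Matrix.sum_apply, vecMulVec_apply] using congr_fun₂ hM' i j

theorem exists_dotProduct_ne_zero (he : ∀ k l, star (e k) ⬝ᵥ e l = if k = l then 1 else 0)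
    {x : n → ℂ} (hx : x ≠ 0) : ∃ k, star (e k) ⬝ᵥ x ≠ 0 := by
  by_contra! h
  refine hx ?_
  calc x = (∑ k, vecMulVec (e k) (star (e k))) *ᵥ x := by rw [sum_vecMulVec_eq_one he, one_mulVec]
    _ = 0 := by simp [sum_mulVec, vecMulVec_mulVec, h]

theorem exists_coeff_curry_ne_zero
    (he : ∀ k l, star (e k) ⬝ᵥ e l = if k = l then 1 else 0) {ψ : m × n → ℂ} (hψ : ψ ≠ 0) :
    ∃ i, (fun k => star (e k) ⬝ᵥ Function.curry ψ i) ≠ 0 := by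
  obtain ⟨⟨i, j⟩, hij⟩ := Function.ne_iff.mp hψ
  obtain ⟨k, hk⟩ := exists_dotProduct_ne_zero he (x := Function.curry ψ i)
    (Function.ne_iff.mpr ⟨j, hij⟩)
  exact ⟨i, Function.ne_iff.mpr ⟨k, hk⟩⟩

end Orthonormal

end Matrix

theorem channelApply_vecMulVec {ι m n : Type*} [Fintype ι] [Fintype m] [Fintype n]
    (E : ι → Matrix m n ℂ) (ψ : n → ℂ) :
    channelApply E (vecMulVec ψ (star ψ)) = ∑ k, vecMulVec (E k *ᵥ ψ) (star (E k *ᵥ ψ)) :=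
  Finset.sum_congr rfl fun k _ => conj_vecMulVec_star (E k) ψ

theorem trace_channelApply_mul_channelApply {ι κ m n : Type*} [Fintype ι] [Fintype κ]
    [Fintype m] [Fintype n] (E : ι → Matrix m n ℂ) (F : κ → Matrix m n ℂ) (ψ φ : n → ℂ) :
    (channelApply E (vecMulVec ψ (star ψ)) * channelApply F (vecMulVec φ (star φ))).trace =
      ((∑ p, ∑ q, Complex.normSq (star (E p *ᵥ ψ) ⬝ᵥ (F q *ᵥ φ)) : ℝ) : ℂ) := by
  simp only [channelApply_vecMulVec, Finset.sum_mul, Finset.mul_sum, trace_sum,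
    trace_vecMulVec_mul_vecMulVec, Complex.ofReal_sum]
  exact Finset.sum_comm

theorem trace_channelApply_mul_channelApply_ne_zero {ι κ m n : Type*} [Fintype ι] [Fintype κ]
    [Fintype m] [Fintype n] {E : ι → Matrix m n ℂ} {F : κ → Matrix m n ℂ} {ψ φ : n → ℂ}
    {p : ι} {q : κ} (h : star (E p *ᵥ ψ) ⬝ᵥ (F q *ᵥ φ) ≠ 0) :
    (channelApply E (vecMulVec ψ (star ψ)) * channelApply F (vecMulVec φ (star φ))).trace ≠ 0 := by
  rw [trace_channelApply_mul_channelApply, Complex.ofReal_ne_zero]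
  refine (Finset.sum_pos' (fun _ _ => Finset.sum_nonneg fun _ _ => Complex.normSq_nonneg _)
    ⟨p, Finset.mem_univ _, ?_⟩).ne'
  exact Finset.sum_pos' (fun _ _ => Complex.normSq_nonneg _)
    ⟨q, Finset.mem_univ _, Complex.normSq_pos.mpr h⟩

theorem exists_cross_mul_ne_zero {ι K : Type*} [Ring K] [NoZeroDivisors K] {a b a' b' : ι → K}
    (h : a ≠ 0 ∨ b ≠ 0) (h' : a' ≠ 0 ∨ b' ≠ 0) :
    ∃ k l, a k * b' l ≠ 0 ∨ b k * a' l ≠ 0 ∨ (a k + b k) * (a' l - b' l) ≠ 0 := by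
  by_contra! H
  have h₁ : a = 0 ∨ b' = 0 := vecMulVec_eq_zero.mp (ext fun k l => (H k l).1)
  have h₂ : b = 0 ∨ a' = 0 := vecMulVec_eq_zero.mp (ext fun k l => (H k l).2.1)
  have h₃ : a + b = 0 ∨ a' - b' = 0 := vecMulVec_eq_zero.mp (ext fun k l => (H k l).2.2)
  -- `a ≠ 0` forces `b' = 0`, then `a' ≠ 0`, `b = 0` and `a' = a' - b' = 0`;
  -- symmetrically for `b ≠ 0`.
  grind

section KrausFamily

variable {d : ℕ} (e f : Fin d → Fin d → ℂ)

noncomputable def inKet : Fin 4 → Fin 2 → ℂ := ![ket0, ketP, ket1, ketM]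

noncomputable def outKet : Fin 4 → Fin 2 → ℂ := ![ket0, ket1, ket0, ket1]

noncomputable def krausIn (p : Fin 4 × Fin d) : Fin 2 × Fin d → ℂ := kronVec (inKet p.1) (e p.2)

noncomputable def krausOut (p : Fin 4 × Fin d) : Fin 2 × Fin d → ℂ :=
  kronVec (outKet p.1) (![e p.2, e p.2, f p.2, f p.2] p.1)

theorem EOp_eq (p : Fin 4 × Fin d) :
    EOp e f p = (Real.sqrt 2 : ℂ)⁻¹ • vecMulVec (krausOut e f p) (star (krausIn e p)) := by
  obtain ⟨t, k⟩ := p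
  fin_cases t <;> simp [EOp, krausIn, krausOut, inKet, outKet, kronecker_vecMulVec, star_kronVec]

theorem star_sqrt_two_inv_mul_self : star ((Real.sqrt 2 : ℂ))⁻¹ * (Real.sqrt 2 : ℂ)⁻¹ = 2⁻¹ := by
  simp [← mul_inv, ← Complex.ofReal_mul]

theorem star_ket0_dotProduct_self : star ket0 ⬝ᵥ ket0 = 1 := by
  rw [vec2_dotProduct]
  simp [ket0]

theorem star_ket1_dotProduct_self : star ket1 ⬝ᵥ ket1 = 1 := by
  rw [vec2_dotProduct]
  simp [ket1]

theorem sum_vecMulVec_inKet : ∑ t, vecMulVec (inKet t) (star (inKet t)) = (2 : ℂ) • 1 := by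
  ext i j
  fin_cases i <;> fin_cases j <;>
    simp [Fin.sum_univ_four, inKet, ket0, ket1, ketP, ketM, vecMulVec_apply, Matrix.sum_apply,
      ← mul_inv, ← Complex.ofReal_mul] <;> norm_num

variable {e f}

theorem star_krausOut_dotProduct_self
    (he : ∀ k l, star (e k) ⬝ᵥ e l = if k = l then 1 else 0)
    (hf : ∀ k l, star (f k) ⬝ᵥ f l = if k = l then 1 else 0) (p : Fin 4 × Fin d) :
    star (krausOut e f p) ⬝ᵥ krausOut e f p = 1 := by
  obtain ⟨t, k⟩ := p
  rw [krausOut, star_kronVec, kronVec_dotProduct_kronVec]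
  fin_cases t <;>
    simp [outKet, he, hf, star_ket0_dotProduct_self, star_ket1_dotProduct_self, -vec2_dotProduct]

theorem sum_conjTranspose_EOp_mul_EOp
    (he : ∀ k l, star (e k) ⬝ᵥ e l = if k = l then 1 else 0)
    (hf : ∀ k l, star (f k) ⬝ᵥ f l = if k = l then 1 else 0) :
    ∑ p, (EOp e f p)ᴴ * EOp e f p = 1 := by
  simp only [EOp_eq, conjTranspose_mul_self_smul_vecMulVec, star_krausOut_dotProduct_self he hf,
    star_sqrt_two_inv_mul_self, mul_one, ← Finset.smul_sum, krausIn, sum_vecMulVec_kronVec,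
    sum_vecMulVec_inKet, sum_vecMulVec_eq_one he, smul_kronecker, one_kronecker_one, smul_smul]
  norm_num

theorem star_EOp_mulVec_dotProduct_EOp_mulVec (p q : Fin 4 × Fin d) (ψ φ : Fin 2 × Fin d → ℂ) :
    star (EOp e f p *ᵥ ψ) ⬝ᵥ (EOp e f q *ᵥ φ) =
      2⁻¹ * star (star (krausIn e p) ⬝ᵥ ψ) * (star (krausIn e q) ⬝ᵥ φ) *
        (star (krausOut e f p) ⬝ᵥ krausOut e f q) := by
  rw [EOp_eq, EOp_eq, smul_vecMulVec_mulVec, smul_vecMulVec_mulVec, star_smul, smul_dotProduct,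
    dotProduct_smul, smul_eq_mul, smul_eq_mul, star_mul, ← star_sqrt_two_inv_mul_self]
  ring

theorem star_krausIn_dotProduct (t : Fin 4) (k : Fin d) (ψ : Fin 2 × Fin d → ℂ) :
    star (krausIn e (t, k)) ⬝ᵥ ψ =
      let a := star (e k) ⬝ᵥ Function.curry ψ 0
      let b := star (e k) ⬝ᵥ Function.curry ψ 1
      ![a, (Real.sqrt 2 : ℂ)⁻¹ * (a + b), b, (Real.sqrt 2 : ℂ)⁻¹ * (a - b)] t := by
  rw [krausIn, star_kronVec_dotProduct, Fin.sum_univ_two]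
  fin_cases t <;> simp [inKet, ket0, ket1, ketP, ketM] <;> ring

theorem exists_star_EOp_mulVec_dotProduct_ne_zero
    (he : ∀ k l, star (e k) ⬝ᵥ e l = if k = l then 1 else 0)
    (hef : ∀ k l, star (e k) ⬝ᵥ f l ≠ 0) {ψ φ : Fin 2 × Fin d → ℂ} (hψ : ψ ≠ 0) (hφ : φ ≠ 0) :
    ∃ p q, star (EOp e f p *ᵥ ψ) ⬝ᵥ (EOp e f q *ᵥ φ) ≠ 0 := by
  set a : Fin 2 → Fin d → ℂ := fun i k => star (e k) ⬝ᵥ Function.curry ψ i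
  set b : Fin 2 → Fin d → ℂ := fun i k => star (e k) ⬝ᵥ Function.curry φ i
  have ha : star (a 0) ≠ 0 ∨ star (a 1) ≠ 0 := by
    simpa [Fin.exists_fin_two] using exists_coeff_curry_ne_zero he hψ
  have hb : b 0 ≠ 0 ∨ b 1 ≠ 0 := by
    simpa [Fin.exists_fin_two] using exists_coeff_curry_ne_zero he hφ
  have hfe : ∀ k l, star (f k) ⬝ᵥ e l ≠ 0 := fun k l h => hef l k (by
    rw [star_dotProduct, h, star_zero])
  obtain ⟨k, l, h | h | h⟩ := exists_cross_mul_ne_zero ha hb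
  · refine ⟨(0, k), (2, l), ?_⟩
    rw [star_EOp_mulVec_dotProduct_EOp_mulVec, star_krausIn_dotProduct, star_krausIn_dotProduct]
    simpa [krausOut, outKet, star_kronVec, kronVec_dotProduct_kronVec, star_ket0_dotProduct_self,
      -vec2_dotProduct, hef k l] using h
  · refine ⟨(2, k), (0, l), ?_⟩
    rw [star_EOp_mulVec_dotProduct_EOp_mulVec, star_krausIn_dotProduct, star_krausIn_dotProduct]
    simpa [krausOut, outKet, star_kronVec, kronVec_dotProduct_kronVec, star_ket0_dotProduct_self,
      -vec2_dotProduct, hfe k l] using h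
  · refine ⟨(1, k), (3, l), ?_⟩
    rw [star_EOp_mulVec_dotProduct_EOp_mulVec, star_krausIn_dotProduct, star_krausIn_dotProduct]
    simpa [krausOut, outKet, star_kronVec, kronVec_dotProduct_kronVec, star_ket1_dotProduct_self,
      -vec2_dotProduct, hef k l] using h

end KrausFamily

/-- for orthonormal bases `e`, `f` of `ℂ^d` with `⟨e_k, f_l⟩ ≠ 0` for all
`k, l`, the above family is a valid Kraus family on `ℂ² ⊗ ℂ^d` and the associated
channel `E` satisfies `α(E) = 1`. -/
theorem stmt_13 (d : ℕ) (e f : Fin d → Fin d → ℂ)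
    (he : ∀ k l, star (e k) ⬝ᵥ e l = if k = l then 1 else 0)
    (hf : ∀ k l, star (f k) ⬝ᵥ f l = if k = l then 1 else 0)
    (hef : ∀ k l, star (e k) ⬝ᵥ f l ≠ 0) :
    (∑ p, (EOp e f p)ᴴ * EOp e f p = 1) ∧
    (∀ ψ φ : Fin 2 × Fin d → ℂ, star ψ ⬝ᵥ ψ = 1 → star φ ⬝ᵥ φ = 1 →
      (channelApply (EOp e f) (vecMulVec ψ (star ψ)) *
        channelApply (EOp e f) (vecMulVec φ (star φ))).trace ≠ 0) := by
  refine ⟨sum_conjTranspose_EOp_mul_EOp he hf, fun ψ φ hψ hφ => ?_⟩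
  have ne_zero_of_unit {χ : Fin 2 × Fin d → ℂ} (hχ : star χ ⬝ᵥ χ = 1) : χ ≠ 0 := by
    rintro rfl
    simp at hχ
  obtain ⟨p, q, hpq⟩ :=
    exists_star_EOp_mulVec_dotProduct_ne_zero he hef (ne_zero_of_unit hψ) (ne_zero_of_unit hφ)
  exact trace_channelApply_mul_channelApply_ne_zero hpq
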